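/- arXiv:1512.03663 — 2 statements merged into one kernel-verified Lean document; each statement's English description precedes it below -/
import Mathlib

section
/- Let (X(t))_{t∈ℝ^d} be a measurable stationary random field, f, g : ℝ → ℝ measurable with E[f(X(0))²] < ∞, E[g(X(0))²] < ∞, and ∫_{ℝ^d} |Cov(f(X(0)), g(X(t)))| dt < ∞. Let (W_n) be a Van Hove-growing sequence of compact subsets of ℝ^d. Then lim_{n→∞} (1/λ_d(W_n)) Cov(∫_{W_n} f(X(t)) dt, ∫_{W_n} g(X(t)) dt) = ∫_{ℝ^d} Cov(f(X(0)), g(X(t))) dt. -/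
open MeasureTheory ProbabilityTheory Filter
open scoped Pointwise

/-!
Write `C u = Cov(f(X 0), g(X u))`. By Fubini and stationarity,
`Cov(∫_W f(X), ∫_W g(X)) = ∫_{W × W} C(t - s) ds dt`, and the shear `(s, t) ↦ (s, t - s)` turns
this into `∫ C(u) λ(W ∩ (W - u)) du`. A point of `W \ (W - u)` is joined to a point outside `W` by
a segment of length `‖u‖`, so it lies within `‖u‖` of `∂W`; covering a ball of radius `‖u‖` by
finitely many unit balls, the Van Hove condition gives `λ(W ∩ (W - u)) / λ(W) → 1` for every `u`.
Dominated convergence, with the integrable bound `|C|`, finishes the proof.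
-/

open Function Metric Set Topology
open scoped ENNReal

theorem IsPreconnected.inter_frontier_nonempty {α : Type*} [TopologicalSpace α] {s t : Set α}
    (hs : IsPreconnected s) (hst : (s ∩ t).Nonempty) (hst' : (s \ t).Nonempty) :
    (s ∩ frontier t).Nonempty := by
  by_contra h
  have hsplit : s ⊆ interior t ∪ (closure t)ᶜ := fun z hz => by
    by_cases hzc : z ∈ closure t
    · exact .inl (by_contra fun hzi => h ⟨z, hz, hzc, hzi⟩)
    · exact .inr hzc
  obtain ⟨x, hxs, hxt⟩ := hst
  obtain ⟨y, hys, hyt⟩ := hst'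
  obtain ⟨z, -, hzi, hzc⟩ := hs _ _ isOpen_interior isClosed_closure.isOpen_compl hsplit
    ⟨x, hxs, (hsplit hxs).resolve_right (not_not.2 (subset_closure hxt))⟩
    ⟨y, hys, (hsplit hys).resolve_left fun hyi => hyt (interior_subset hyi)⟩
  exact hzc (interior_subset_closure hzi)

section NormedSpace

variable {E : Type*} [NormedAddCommGroup E]

theorem diff_preimage_add_subset_frontier_add_closedBall [NormedSpace ℝ E] (W : Set E) (u : E) :
    W \ (· + u) ⁻¹' W ⊆ frontier W + closedBall 0 ‖u‖ := by
  rintro x ⟨hxW, hxuW⟩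
  obtain ⟨y, hy, hyW⟩ := (convex_segment x (x + u)).isPreconnected.inter_frontier_nonempty
    ⟨x, left_mem_segment ℝ x (x + u), hxW⟩ ⟨x + u, right_mem_segment ℝ x (x + u), hxuW⟩
  refine ⟨y, hyW, x - y, ?_, add_sub_cancel y x⟩
  have hdist := dist_add_dist_of_mem_segment hy
  rw [dist_self_add_right] at hdist
  rw [mem_closedBall, dist_zero_right, ← dist_eq_norm]
  linarith [dist_nonneg (x := y) (y := x + u)]

variable [MeasurableSpace E] [ProperSpace E] (μ : Measure E)

theorem exists_measure_add_closedBall_le [μ.IsAddLeftInvariant] (R : ℝ) :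
    ∃ N : ℕ, ∀ S : Set E, μ (S + closedBall 0 R) ≤ N * μ (S + closedBall 0 1) := by
  obtain ⟨T, hT⟩ := (isCompact_closedBall (0 : E) R).elim_finite_subcover (fun c => ball c 1)
    (fun _ => isOpen_ball) fun x _ => mem_iUnion.2 ⟨x, mem_ball_self one_pos⟩
  refine ⟨T.card, fun S => ?_⟩
  have hcover : S + closedBall 0 R ⊆ ⋃ c ∈ T, c +ᵥ (S + closedBall 0 1) := by
    rintro _ ⟨s, hs, b, hb, rfl⟩
    obtain ⟨c, hc, hbc⟩ := mem_iUnion₂.1 (hT hb)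
    refine mem_biUnion hc ⟨s + (b - c), ⟨s, hs, b - c, ?_, rfl⟩, by simp only [vadd_eq_add]; abel⟩
    rw [mem_closedBall, dist_zero_right, ← dist_eq_norm]
    exact (mem_ball.1 hbc).le
  calc μ (S + closedBall 0 R) ≤ ∑ c ∈ T, μ (c +ᵥ (S + closedBall 0 1)) :=
        (measure_mono hcover).trans (measure_biUnion_finset_le T _)
    _ = T.card * μ (S + closedBall 0 1) := by simp [measure_vadd]

variable [NormedSpace ℝ E] [IsFiniteMeasureOnCompacts μ]

theorem measureReal_diff_preimage_add_le {u : E} {N : ℕ}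
    (hN : ∀ S : Set E, μ (S + closedBall 0 ‖u‖) ≤ N * μ (S + closedBall 0 1))
    {W : Set E} (hW : IsCompact W) :
    μ.real (W \ (· + u) ⁻¹' W) ≤ N * μ.real (frontier W + closedBall 0 1) := by
  have hfr : IsCompact (frontier W + closedBall (0 : E) 1) :=
    (hW.of_isClosed_subset isClosed_frontier hW.isClosed.frontier_subset).add
      (isCompact_closedBall 0 1)
  have h := (measure_mono (diff_preimage_add_subset_frontier_add_closedBall W u)).trans (hN _)
  rw [measureReal_def, measureReal_def, ← ENNReal.toReal_natCast, ← ENNReal.toReal_mul]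
  exact ENNReal.toReal_mono (ENNReal.mul_ne_top (by simp) hfr.measure_lt_top.ne) h

theorem tendsto_measureReal_inter_preimage_add_div [BorelSpace E] [μ.IsAddLeftInvariant]
    {W : ℕ → Set E} (hcomp : ∀ n, IsCompact (W n)) (hpos : ∀ᶠ n in atTop, 0 < μ (W n))
    (hVH : Tendsto (fun n => μ.real (frontier (W n) + closedBall 0 1) / μ.real (W n))
      atTop (𝓝 0))
    (u : E) :
    Tendsto (fun n => μ.real (W n ∩ (· + u) ⁻¹' W n) / μ.real (W n)) atTop (𝓝 1) := by
  obtain ⟨N, hN⟩ := exists_measure_add_closedBall_le μ ‖u‖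
  have hdiff : Tendsto (fun n => μ.real (W n \ (· + u) ⁻¹' W n) / μ.real (W n))
      atTop (𝓝 0) := by
    refine squeeze_zero (fun n => by positivity) (fun n => ?_)
      (by simpa using hVH.const_mul (N : ℝ))
    rw [mul_div_assoc']
    exact div_le_div_of_nonneg_right (measureReal_diff_preimage_add_le μ hN (hcomp n))
      measureReal_nonneg
  have hlim : Tendsto (fun n => 1 - μ.real (W n \ (· + u) ⁻¹' W n) / μ.real (W n))
      atTop (𝓝 1) := by
    simpa using tendsto_const_nhds.sub hdiff
  refine hlim.congr' ?_
  filter_upwards [hpos] with n hn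
  have hWn : μ (W n) ≠ ∞ := (hcomp n).measure_lt_top.ne
  have hreal : μ.real (W n) ≠ 0 := (measureReal_ne_zero_iff hWn).2 hn.ne'
  have hsplit := measureReal_inter_add_sdiff (s := W n)
    ((hcomp n).isClosed.measurableSet.preimage (measurable_add_const u)) hWn
  rw [eq_div_iff hreal, sub_mul, div_mul_cancel₀ _ hreal]
  linarith

end NormedSpace

section Fubini

variable {T Ω : Type*} [MeasurableSpace T] [MeasurableSpace Ω] {ν : Measure T} {P : Measure Ω}

theorem integrable_uncurry_of_integral_norm_le {E : Type*} [NormedAddCommGroup E]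
    [IsFiniteMeasure ν] [SFinite P] {H : T → Ω → E}
    (hH : AEStronglyMeasurable (uncurry H) (ν.prod P)) (hint : ∀ t, Integrable (H t) P)
    {C : ℝ} (hC : ∀ t, ∫ ω, ‖H t ω‖ ∂P ≤ C) :
    Integrable (uncurry H) (ν.prod P) :=
  (integrable_prod_iff hH).2 ⟨ae_of_all _ hint,
    .of_bound hH.norm.integral_prod_right' C (ae_of_all _ fun t =>
      (Real.norm_of_nonneg (integral_nonneg fun _ => norm_nonneg _)).trans_le (hC t))⟩

variable [SFinite ν] [SFinite P]

theorem ae_integral_sub_integral_integral {F : T → Ω → ℝ}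
    (hF : Integrable (uncurry F) (ν.prod P)) :
    ∀ᵐ ω ∂P, ∫ t, F t ω ∂ν - ∫ ω', ∫ t, F t ω' ∂ν ∂P
      = ∫ t, (F t ω - ∫ ω', F t ω' ∂P) ∂ν := by
  filter_upwards [hF.prod_left_ae] with ω (hω : Integrable (fun t => F t ω) ν)
  have hmean : Integrable (fun t => ∫ ω', F t ω' ∂P) ν := hF.integral_prod_left
  rw [integral_sub hω hmean, integral_integral_swap (f := fun ω t => F t ω) hF.swap]

theorem covariance_integral_integral {F G : T → Ω → ℝ}
    (hF : Integrable (uncurry F) (ν.prod P)) (hG : Integrable (uncurry G) (ν.prod P))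
    (hFG : Integrable
      (fun q : (T × T) × Ω => (F q.1.1 q.2 - P[F q.1.1]) * (G q.1.2 q.2 - P[G q.1.2]))
      ((ν.prod ν).prod P)) :
    cov[fun ω => ∫ t, F t ω ∂ν, fun ω => ∫ t, G t ω ∂ν; P]
      = ∫ p, cov[F p.1, G p.2; P] ∂(ν.prod ν) := by
  calc cov[fun ω => ∫ t, F t ω ∂ν, fun ω => ∫ t, G t ω ∂ν; P]
      = ∫ ω, (∫ t, (F t ω - P[F t]) ∂ν) * (∫ t, (G t ω - P[G t]) ∂ν) ∂P := by
        refine integral_congr_ae ?_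
        filter_upwards [ae_integral_sub_integral_integral hF,
          ae_integral_sub_integral_integral hG] with ω hFω hGω
        rw [← hFω, ← hGω]
    _ = ∫ ω, ∫ p, (F p.1 ω - P[F p.1]) * (G p.2 ω - P[G p.2]) ∂(ν.prod ν) ∂P := by
        congr 1 with ω
        exact (integral_prod_mul (μ := ν) (ν := ν) (fun s => F s ω - P[F s])
          (fun t => G t ω - P[G t])).symm
    _ = ∫ p, cov[F p.1, G p.2; P] ∂(ν.prod ν) := integral_integral_swap hFG.swap

end Fubini

theorem integral_abs_mul_le_of_memLp_two {Ω : Type*} [MeasurableSpace Ω] {P : Measure Ω}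
    {A B : Ω → ℝ} (hA : MemLp A 2 P) (hB : MemLp B 2 P) :
    ∫ ω, |A ω * B ω| ∂P ≤ (∫ ω, A ω ^ 2 ∂P + ∫ ω, B ω ^ 2 ∂P) / 2 := by
  rw [← integral_add hA.integrable_sq hB.integrable_sq, ← integral_div]
  refine integral_mono (hA.integrable_mul hB).abs
    ((hA.integrable_sq.add hB.integrable_sq).div_const 2) fun ω => ?_
  rw [abs_mul]
  nlinarith [sq_nonneg (|A ω| - |B ω|), sq_abs (A ω), sq_abs (B ω)]

theorem measurable_covariance_right {T Ω : Type*} [MeasurableSpace T] [MeasurableSpace Ω]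
    {P : Measure Ω} [SFinite P] {A : Ω → ℝ} (hA : Measurable A) {G : T → Ω → ℝ}
    (hG : Measurable (uncurry G)) :
    Measurable fun t => cov[A, G t; P] := by
  have hmean : Measurable fun t => P[G t] :=
    hG.stronglyMeasurable.integral_prod_right'.measurable
  exact ((((hA.comp measurable_snd).sub_const _).mul
    (hG.sub (hmean.comp measurable_fst))).stronglyMeasurable.integral_prod_right').measurable

theorem ProbabilityTheory.IdentDistrib.covariance_eq {Ω Ω' : Type*} [MeasurableSpace Ω]
    [MeasurableSpace Ω'] {P : Measure Ω} {P' : Measure Ω'} {A B : Ω → ℝ} {A' B' : Ω' → ℝ}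
    (h : IdentDistrib (fun ω => (A ω, B ω)) (fun ω => (A' ω, B' ω)) P P') :
    cov[A, B; P] = cov[A', B'; P'] := by
  have hA : P[A] = P'[A'] := (h.comp measurable_fst).integral_eq
  have hB : P[B] = P'[B'] := (h.comp measurable_snd).integral_eq
  rw [covariance, covariance, hA, hB]
  exact (h.comp ((measurable_fst.sub_const _).mul (measurable_snd.sub_const _))).integral_eq

theorem integral_prod_restrict_sub {G : Type*} [AddCommGroup G] [MeasurableSpace G]
    [MeasurableAdd₂ G] [MeasurableNeg G] (μ : Measure G) [SFinite μ] [μ.IsAddRightInvariant]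
    {c : G → ℝ} (hc : Integrable c μ) {W : Set G} (hW : MeasurableSet W) (hWμ : μ W ≠ ∞) :
    ∫ p, c (p.2 - p.1) ∂((μ.restrict W).prod (μ.restrict W))
      = ∫ u, c u * μ.real (W ∩ (· + u) ⁻¹' W) ∂μ := by
  set S : Set (G × G) := {q | q.1 ∈ W ∧ q.1 + q.2 ∈ W} with hS
  set H : G × G → ℝ := S.indicator fun q => c q.2 with hH_def
  have hHmeas : MeasurableSet S := (measurable_fst hW).inter (measurable_add hW)
  have hH : Integrable H (μ.prod μ) := by
    refine (((integrable_indicator_iff hW).2 (integrableOn_const (C := (1 : ℝ)) hWμ)).mul_prod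
      hc.norm).mono' (hc.1.comp_snd.indicator hHmeas) (ae_of_all _ fun q => ?_)
    by_cases hq : q ∈ S
    · rw [hH_def, indicator_of_mem hq, indicator_of_mem hq.1, one_mul]
    · rw [hH_def, indicator_of_notMem hq, norm_zero]
      exact mul_nonneg (indicator_nonneg (fun _ _ => zero_le_one) _) (norm_nonneg _)
  calc ∫ p, c (p.2 - p.1) ∂((μ.restrict W).prod (μ.restrict W))
      = ∫ p, H (p.1, p.2 - p.1) ∂(μ.prod μ) := by
        rw [Measure.prod_restrict, ← integral_indicator (hW.prod hW)]
        congr with p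
        by_cases hp : p ∈ W ×ˢ W
        · rw [indicator_of_mem hp, hH_def, indicator_of_mem (by simpa [hS] using hp)]
        · rw [indicator_of_notMem hp, hH_def, indicator_of_notMem (by simpa [hS] using hp)]
    _ = ∫ q, H q ∂(μ.prod μ) :=
        (measurePreserving_prod_sub μ μ).integral_comp
          (MeasurableEquiv.shearSubRight G).measurableEmbedding H
    _ = ∫ u, ∫ s, H (s, u) ∂μ ∂μ := integral_prod_symm H hH
    _ = ∫ u, c u * μ.real (W ∩ (· + u) ⁻¹' W) ∂μ := by
        congr with u
        rw [mul_comm, ← smul_eq_mul,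
          ← integral_indicator_const (c u) (hW.inter (hW.preimage (measurable_add_const u)))]
        rfl

theorem measurable_measureReal_inter_preimage_add {G : Type*} [Add G] [MeasurableSpace G]
    [MeasurableAdd₂ G] (μ : Measure G) [SFinite μ] {W : Set G} (hW : MeasurableSet W) :
    Measurable fun u => μ.real (W ∩ (· + u) ⁻¹' W) :=
  (measurable_measure_prodMk_left
    ((measurable_snd hW).inter ((measurable_snd.add measurable_fst) hW))).ennreal_toReal

theorem tendsto_integral_mul_of_tendsto_one {α : Type*} [MeasurableSpace α] {μ : Measure α}
    {c : α → ℝ} (hc : Integrable c μ) {r : ℕ → α → ℝ} (hr : ∀ n, AEStronglyMeasurable (r n) μ)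
    (hr1 : ∀ n a, |r n a| ≤ 1) (hlim : ∀ a, Tendsto (fun n => r n a) atTop (𝓝 1)) :
    Tendsto (fun n => ∫ a, c a * r n a ∂μ) atTop (𝓝 (∫ a, c a ∂μ)) :=
  tendsto_integral_of_dominated_convergence (fun a => ‖c a‖) (fun n => hc.1.mul (hr n)) hc.norm
    (fun n => ae_of_all _ fun a => by
      rw [norm_mul]
      exact mul_le_of_le_one_right (norm_nonneg _) (hr1 n a))
    (ae_of_all _ fun a => by simpa using (hlim a).const_mul (c a))

def IsStationaryField {E Ω β : Type*} [Add E] [MeasurableSpace Ω] [MeasurableSpace β]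
    (X : E → Ω → β) (P : Measure Ω) : Prop :=
  ∀ (n : ℕ) (ts : Fin n → E) (u : E),
    IdentDistrib (fun ω i => X (ts i) ω) (fun ω i => X (ts i + u) ω) P P

namespace IsStationaryField

variable {E Ω β : Type*} [MeasurableSpace Ω] [MeasurableSpace β] {P : Measure Ω}

section AddGroup

variable [AddGroup E] {X : E → Ω → β}

theorem identDistrib_pair (hX : IsStationaryField X P) (s t : E) :
    IdentDistrib (fun ω => (X 0 ω, X (t - s) ω)) (fun ω => (X s ω, X t ω)) P P := by
  simpa [Function.comp_def] using
    (hX 2 ![0, t - s] s).comp ((measurable_pi_apply 0).prodMk (measurable_pi_apply 1))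

theorem identDistrib (hX : IsStationaryField X P) (t : E) : IdentDistrib (X 0) (X t) P P := by
  simpa [Function.comp_def] using (hX.identDistrib_pair t t).comp measurable_fst

variable [MeasurableSpace E] {f g : β → ℝ}

theorem integrable_comp_uncurry [SFinite P] (hX : IsStationaryField X P)
    (hXm : Measurable (uncurry X)) (ν : Measure E) [IsFiniteMeasure ν] (hf : Measurable f)
    (hf1 : Integrable (fun ω => f (X 0 ω)) P) :
    Integrable (fun p : E × Ω => f (X p.1 p.2)) (ν.prod P) :=
  integrable_uncurry_of_integral_norm_le (H := fun t ω => f (X t ω))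
    (hf.comp hXm).aestronglyMeasurable (fun t => ((hX.identDistrib t).comp hf).integrable_snd hf1)
    (fun t => ((hX.identDistrib t).comp hf).norm.integral_eq.ge)

theorem integrable_centered_mul [IsFiniteMeasure P] (hX : IsStationaryField X P)
    (hXm : Measurable (uncurry X)) (ν : Measure E) [IsFiniteMeasure ν]
    (hf : Measurable f) (hg : Measurable g)
    (hf2 : MemLp (fun ω => f (X 0 ω)) 2 P) (hg2 : MemLp (fun ω => g (X 0 ω)) 2 P) :
    Integrable (fun q : (E × E) × Ω => (f (X q.1.1 q.2) - P[fun ω => f (X q.1.1 ω)])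
      * (g (X q.1.2 q.2) - P[fun ω => g (X q.1.2 ω)])) ((ν.prod ν).prod P) := by
  have hmean {φ : β → ℝ} (hφ : Measurable φ) (t : E) :
      P[fun ω => φ (X t ω)] = P[fun ω => φ (X 0 ω)] :=
    ((hX.identDistrib t).comp hφ).integral_eq.symm
  have hcentered {φ : β → ℝ} (hφ : Measurable φ) (hφ2 : MemLp (fun ω => φ (X 0 ω)) 2 P)
      (t : E) : MemLp (fun ω => φ (X t ω) - P[fun ω => φ (X 0 ω)]) 2 P :=
    (((hX.identDistrib t).comp hφ).memLp_snd hφ2).sub (memLp_const _)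
  have hvar {φ : β → ℝ} (hφ : Measurable φ) (t : E) :
      ∫ ω, (φ (X t ω) - P[fun ω => φ (X 0 ω)]) ^ 2 ∂P = Var[fun ω => φ (X 0 ω); P] := by
    have hφX : Measurable fun ω => φ (X t ω) := hφ.comp (hXm.comp measurable_prodMk_left)
    rw [← hmean hφ t, ← variance_eq_integral hφX.aemeasurable]
    exact ((hX.identDistrib t).comp hφ).variance_eq.symm
  simp_rw [hmean hf, hmean hg]
  refine integrable_uncurry_of_integral_norm_le (H := fun (p : E × E) ω =>
      (f (X p.1 ω) - P[fun ω => f (X 0 ω)]) * (g (X p.2 ω) - P[fun ω => g (X 0 ω)]))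
    ?_ (fun p => (hcentered hf hf2 p.1).integrable_mul (hcentered hg hg2 p.2))
    (C := (Var[fun ω => f (X 0 ω); P] + Var[fun ω => g (X 0 ω); P]) / 2) fun p => ?_
  · exact (((hf.comp (hXm.comp (measurable_fst.fst.prodMk measurable_snd))).sub_const _).mul
      ((hg.comp (hXm.comp (measurable_fst.snd.prodMk measurable_snd))).sub_const _))
      |>.aestronglyMeasurable
  · simp only [Real.norm_eq_abs]
    rw [← hvar hf p.1, ← hvar hg p.2]
    exact integral_abs_mul_le_of_memLp_two (hcentered hf hf2 p.1) (hcentered hg hg2 p.2)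

theorem covariance_integral_integral [IsFiniteMeasure P] (hX : IsStationaryField X P)
    (hXm : Measurable (uncurry X)) (ν : Measure E) [IsFiniteMeasure ν]
    (hf : Measurable f) (hg : Measurable g)
    (hf2 : MemLp (fun ω => f (X 0 ω)) 2 P) (hg2 : MemLp (fun ω => g (X 0 ω)) 2 P) :
    cov[fun ω => ∫ t, f (X t ω) ∂ν, fun ω => ∫ t, g (X t ω) ∂ν; P]
      = ∫ p, cov[fun ω => f (X 0 ω), fun ω => g (X (p.2 - p.1) ω); P] ∂(ν.prod ν) := by
  rw [_root_.covariance_integral_integral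
    (hX.integrable_comp_uncurry hXm ν hf (hf2.integrable one_le_two))
    (hX.integrable_comp_uncurry hXm ν hg (hg2.integrable one_le_two))
    (hX.integrable_centered_mul hXm ν hf hg hf2 hg2)]
  congr 1 with p
  exact ((hX.identDistrib_pair p.1 p.2).comp (hf.prodMap hg)).covariance_eq.symm

end AddGroup

theorem covariance_setIntegral_eq [AddCommGroup E] [MeasurableSpace E] [MeasurableAdd₂ E]
    [MeasurableNeg E] [IsFiniteMeasure P] {X : E → Ω → β} (hX : IsStationaryField X P)
    (hXm : Measurable (uncurry X)) {f g : β → ℝ} (hf : Measurable f) (hg : Measurable g)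
    (hf2 : MemLp (fun ω => f (X 0 ω)) 2 P) (hg2 : MemLp (fun ω => g (X 0 ω)) 2 P)
    (μ : Measure E) [SFinite μ] [μ.IsAddRightInvariant]
    (hC : Integrable (fun u => cov[fun ω => f (X 0 ω), fun ω => g (X u ω); P]) μ)
    {W : Set E} (hW : MeasurableSet W) (hWμ : μ W ≠ ∞) :
    cov[fun ω => ∫ t in W, f (X t ω) ∂μ, fun ω => ∫ t in W, g (X t ω) ∂μ; P]
      = ∫ u, cov[fun ω => f (X 0 ω), fun ω => g (X u ω); P] * μ.real (W ∩ (· + u) ⁻¹' W) ∂μ := by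
  have : IsFiniteMeasure (μ.restrict W) := isFiniteMeasure_restrict.2 hWμ
  rw [hX.covariance_integral_integral hXm _ hf hg hf2 hg2]
  exact integral_prod_restrict_sub μ hC hW hWμ

end IsStationaryField

/-- For a measurable stationary random field `X` and measurable `f, g` with square-integrable
marginals and absolutely integrable covariance function, along any Van Hove-growing sequence
`(W n)` of compact sets,
`(1/λ_d(W n)) Cov(∫_{W n} f(X t) dt, ∫_{W n} g(X t) dt) → ∫_{ℝ^d} Cov(f(X 0), g(X t)) dt`. -/
theorem asymptotic_covariance_limit
    {d : ℕ} {Ω : Type*} [MeasureSpace Ω] [IsProbabilityMeasure (volume : Measure Ω)]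
    (X : EuclideanSpace ℝ (Fin d) → Ω → ℝ)
    (hXmeas : Measurable fun p : EuclideanSpace ℝ (Fin d) × Ω => X p.1 p.2)
    (hstat : ∀ (n : ℕ) (ts : Fin n → EuclideanSpace ℝ (Fin d)) (u : EuclideanSpace ℝ (Fin d)),
      IdentDistrib (fun ω => fun i => X (ts i) ω) (fun ω => fun i => X (ts i + u) ω)
        volume volume)
    (f g : ℝ → ℝ) (hf : Measurable f) (hg : Measurable g)
    (hf2 : Integrable (fun ω => (f (X 0 ω)) ^ 2))
    (hg2 : Integrable (fun ω => (g (X 0 ω)) ^ 2))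
    (Cov : EuclideanSpace ℝ (Fin d) → ℝ)
    (hCov : ∀ t, Cov t =
      ∫ ω, (f (X 0 ω) - ∫ ω', f (X 0 ω')) * (g (X t ω) - ∫ ω', g (X t ω')))
    (hCovInt : Integrable (fun t => |Cov t|))
    (W : ℕ → Set (EuclideanSpace ℝ (Fin d)))
    (hcomp : ∀ n, IsCompact (W n))
    (hpos : ∀ᶠ n in atTop, 0 < volume (W n))
    (hVH : Tendsto
      (fun n => (volume (frontier (W n) + Metric.closedBall (0 : EuclideanSpace ℝ (Fin d)) 1)).toReal
        / (volume (W n)).toReal) atTop (nhds 0)) :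
    Tendsto (fun n =>
      (∫ ω, ((∫ t in W n, f (X t ω)) - ∫ ω', ∫ t in W n, f (X t ω'))
        * ((∫ t in W n, g (X t ω)) - ∫ ω', ∫ t in W n, g (X t ω')))
      / (volume (W n)).toReal)
      atTop (nhds (∫ t, Cov t)) := by
  obtain rfl : Cov = fun t => cov[fun ω => f (X 0 ω), fun ω => g (X t ω)] := funext hCov
  have hX0 : Measurable (X 0) := hXmeas.comp measurable_prodMk_left
  have hmemLp {φ : ℝ → ℝ} (hφ : Measurable φ) (hφ2 : Integrable fun ω => φ (X 0 ω) ^ 2) :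
      MemLp (fun ω => φ (X 0 ω)) 2 volume :=
    (memLp_two_iff_integrable_sq (hφ.comp hX0).aestronglyMeasurable).2 hφ2
  have hC := (integrable_norm_iff (measurable_covariance_right (G := fun t ω => g (X t ω))
    (hf.comp hX0) (hg.comp hXmeas)).aestronglyMeasurable).1 hCovInt
  have hkey n := IsStationaryField.covariance_setIntegral_eq hstat hXmeas hf hg
    (hmemLp hf hf2) (hmemLp hg hg2) volume hC (hcomp n).measurableSet (hcomp n).measure_lt_top.ne
  change Tendsto (fun n => cov[fun ω => ∫ t in W n, f (X t ω), fun ω => ∫ t in W n, g (X t ω)]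
    / volume.real (W n)) atTop _
  simp_rw [hkey, ← integral_div, mul_div_assoc]
  refine tendsto_integral_mul_of_tendsto_one hC (fun n =>
      ((measurable_measureReal_inter_preimage_add volume (hcomp n).measurableSet).div_const
        _).aestronglyMeasurable) (fun n u => ?_)
    (tendsto_measureReal_inter_preimage_add_div volume hcomp hpos hVH)
  rw [abs_of_nonneg (by positivity)]
  exact div_le_one_of_le₀ (measureReal_mono inter_subset_left (hcomp n).measure_lt_top.ne)
    measureReal_nonneg
end

section
/- Let X, Y be bounded real random variables with |X| ≤ S and |Y| ≤ S a.s., and let E₁, E₂ be events such that X·1_{E₁ᶜ} and Y·1_{E₂ᶜ} are independent. Then |Cov(X, Y)| ≤ 6 S² max(ℙ(E₁), ℙ(E₂)). -/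
/-!
Split `X = 1_{E₁} X + 1_{E₁ᶜ} X` and `Y = 1_{E₂} Y + 1_{E₂ᶜ} Y`. By bilinearity,
`Cov(X, Y) = Cov(1_{E₁} X, Y) + Cov(1_{E₁ᶜ} X, 1_{E₂} Y) + Cov(1_{E₁ᶜ} X, 1_{E₂ᶜ} Y)`, and the last
term vanishes by independence. A variable `U` vanishing off an event `E` with `|U| ≤ a`, against a
variable `V` with `|V| ≤ b`, has `|Cov(U, V)| ≤ |𝔼[UV]| + |𝔼U| |𝔼V| ≤ 2ab ℙ(E)`; hence
`|Cov(X, Y)| ≤ 2S² (ℙ(E₁) + ℙ(E₂)) ≤ 4S² max(ℙ(E₁), ℙ(E₂))`.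
-/

open MeasureTheory ProbabilityTheory

lemma Set.mul_indicator_one_eq_indicator {α M : Type*} [MulZeroOneClass M] (s : Set α)
    (f : α → M) : (fun x => f x * s.indicator (fun _ => (1 : M)) x) = s.indicator f := by
  funext x
  by_cases hx : x ∈ s <;> simp [hx]

section

variable {Ω : Type*} {mΩ : MeasurableSpace Ω} {μ : Measure Ω}

lemma abs_covariance_le_of_abs_le_right [IsProbabilityMeasure μ] {U V : Ω → ℝ} {b : ℝ}
    (hU : MemLp U 2 μ) (hV : MemLp V 2 μ) (hVb : ∀ᵐ ω ∂μ, |V ω| ≤ b) :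
    |cov[U, V; μ]| ≤ 2 * b * ∫ ω, |U ω| ∂μ := by
  have hUV : |μ[U * V]| ≤ (∫ ω, |U ω| ∂μ) * b := by
    rw [← integral_mul_const]
    refine abs_integral_le_integral_abs.trans <| integral_mono_of_nonneg
      (ae_of_all _ fun _ => abs_nonneg _) ((hU.integrable one_le_two).abs.mul_const b) ?_
    filter_upwards [hVb] with ω h
    simpa [abs_mul] using mul_le_mul_of_nonneg_left h (abs_nonneg (U ω))
  have hEV : |μ[V]| ≤ b := by
    simpa using norm_integral_le_of_norm_le_const (f := V) hVb
  have hEU : |μ[U]| ≤ ∫ ω, |U ω| ∂μ := abs_integral_le_integral_abs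
  rw [covariance_eq_sub hU hV]
  calc |μ[U * V] - μ[U] * μ[V]| ≤ |μ[U * V]| + |μ[U]| * |μ[V]| := by
        rw [← abs_mul]; exact abs_sub _ _
    _ ≤ (∫ ω, |U ω| ∂μ) * b + (∫ ω, |U ω| ∂μ) * b := by gcongr
    _ = 2 * b * ∫ ω, |U ω| ∂μ := by ring

lemma integral_abs_indicator_le [IsFiniteMeasure μ] {X : Ω → ℝ} {a : ℝ} {s : Set Ω}
    (hs : MeasurableSet s) (hXb : ∀ᵐ ω ∂μ, |X ω| ≤ a) :
    ∫ ω, |s.indicator X ω| ∂μ ≤ a * μ.real s := by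
  calc ∫ ω, |s.indicator X ω| ∂μ ≤ ∫ ω, s.indicator (fun _ => a) ω ∂μ := by
        refine integral_mono_of_nonneg (ae_of_all _ fun _ => abs_nonneg _)
          ((integrable_const a).indicator hs) ?_
        filter_upwards [hXb] with ω h
        by_cases hω : ω ∈ s <;> simp [hω, h]
    _ = a * μ.real s := by rw [integral_indicator_const _ hs, smul_eq_mul, mul_comm]

lemma abs_covariance_indicator_left_le [IsProbabilityMeasure μ] {X Y : Ω → ℝ} {a b : ℝ}
    {s : Set Ω} (hs : MeasurableSet s) (hX : AEStronglyMeasurable X μ)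
    (hY : AEStronglyMeasurable Y μ) (hXb : ∀ᵐ ω ∂μ, |X ω| ≤ a) (hYb : ∀ᵐ ω ∂μ, |Y ω| ≤ b) :
    |cov[s.indicator X, Y; μ]| ≤ 2 * a * b * μ.real s := by
  have hb : 0 ≤ b := hYb.exists.elim fun _ h => (abs_nonneg _).trans h
  calc |cov[s.indicator X, Y; μ]| ≤ 2 * b * ∫ ω, |s.indicator X ω| ∂μ :=
        abs_covariance_le_of_abs_le_right ((MemLp.of_bound hX a hXb).indicator hs)
          (MemLp.of_bound hY b hYb) hYb
    _ ≤ 2 * b * (a * μ.real s) := by gcongr; exact integral_abs_indicator_le hs hXb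
    _ = 2 * a * b * μ.real s := by ring

theorem abs_covariance_le_of_indepFun_indicator_compl [IsProbabilityMeasure μ] {X Y : Ω → ℝ}
    {a b : ℝ} {s t : Set Ω} (hs : MeasurableSet s) (ht : MeasurableSet t)
    (hX : AEStronglyMeasurable X μ) (hY : AEStronglyMeasurable Y μ)
    (hXb : ∀ᵐ ω ∂μ, |X ω| ≤ a) (hYb : ∀ᵐ ω ∂μ, |Y ω| ≤ b)
    (hindep : sᶜ.indicator X ⟂ᵢ[μ] tᶜ.indicator Y) :
    |cov[X, Y; μ]| ≤ 2 * a * b * (μ.real s + μ.real t) := by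
  have hX' : AEStronglyMeasurable (sᶜ.indicator X) μ := hX.indicator hs.compl
  have hX'b : ∀ᵐ ω ∂μ, |sᶜ.indicator X ω| ≤ a := by
    filter_upwards [hXb] with ω h using (norm_indicator_le_norm_self X ω).trans h
  have hsplit : cov[X, Y; μ] = cov[s.indicator X, Y; μ] + cov[t.indicator Y, sᶜ.indicator X; μ]
      + cov[sᶜ.indicator X, tᶜ.indicator Y; μ] := by
    have hXL := MemLp.of_bound (p := 2) hX a hXb
    have hYL := MemLp.of_bound (p := 2) hY b hYb
    rw [covariance_comm (t.indicator Y), add_assoc,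
      ← covariance_add_right (hXL.indicator hs.compl) (hYL.indicator ht) (hYL.indicator ht.compl),
      t.indicator_self_add_compl,
      ← covariance_add_left (hXL.indicator hs) (hXL.indicator hs.compl) hYL,
      s.indicator_self_add_compl]
  rw [hsplit, hindep.covariance_eq_zero (MemLp.of_bound hX' a hX'b)
    ((MemLp.of_bound hY b hYb).indicator ht.compl), add_zero]
  calc _ ≤ |cov[s.indicator X, Y; μ]| + |cov[t.indicator Y, sᶜ.indicator X; μ]| := abs_add_le _ _
    _ ≤ 2 * a * b * μ.real s + 2 * b * a * μ.real t := add_le_add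
        (abs_covariance_indicator_left_le hs hX hY hXb hYb)
        (abs_covariance_indicator_left_le ht hY hX' hYb hX'b)
    _ = 2 * a * b * (μ.real s + μ.real t) := by ring

end

theorem abs_cov_le_of_indep_off_exceptional_general
    {Ω : Type*} [MeasureSpace Ω] [IsProbabilityMeasure (volume : Measure Ω)]
    (X Y : Ω → ℝ) (hX : Measurable X) (hY : Measurable Y)
    (S : ℝ)
    (hXbd : ∀ᵐ ω, |X ω| ≤ S) (hYbd : ∀ᵐ ω, |Y ω| ≤ S)
    (E₁ E₂ : Set Ω) (hE₁ : MeasurableSet E₁) (hE₂ : MeasurableSet E₂)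
    (hindep : IndepFun (fun ω => X ω * E₁ᶜ.indicator (fun _ => (1 : ℝ)) ω)
      (fun ω => Y ω * E₂ᶜ.indicator (fun _ => (1 : ℝ)) ω)) :
    |∫ ω, (X ω - ∫ ω', X ω') * (Y ω - ∫ ω', Y ω')|
      ≤ 6 * S ^ 2 * max (volume E₁).toReal (volume E₂).toReal := by
  rw [Set.mul_indicator_one_eq_indicator, Set.mul_indicator_one_eq_indicator] at hindep
  have hp₁ : volume.real E₁ ≤ max (volume.real E₁) (volume.real E₂) := le_max_left _ _
  have hp₂ : volume.real E₂ ≤ max (volume.real E₁) (volume.real E₂) := le_max_right _ _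
  calc |cov[X, Y]| ≤ 2 * S * S * (volume.real E₁ + volume.real E₂) :=
        abs_covariance_le_of_indepFun_indicator_compl hE₁ hE₂ hX.aestronglyMeasurable
          hY.aestronglyMeasurable hXbd hYbd hindep
    _ ≤ 6 * S ^ 2 * max (volume.real E₁) (volume.real E₂) := by
        nlinarith [sq_nonneg S, measureReal_nonneg (μ := volume) (s := E₂)]

/-- If `X, Y` are bounded by `S` and `X·1_{E₁ᶜ}` is independent of `Y·1_{E₂ᶜ}`,
then `|Cov(X, Y)| ≤ 6 S² max(ℙ(E₁), ℙ(E₂))`. -/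
theorem abs_cov_le_of_indep_off_exceptional
    {Ω : Type*} [MeasureSpace Ω] [IsProbabilityMeasure (volume : Measure Ω)]
    (X Y : Ω → ℝ) (hX : Measurable X) (hY : Measurable Y)
    (S : ℝ) (hS : 0 < S)
    (hXbd : ∀ᵐ ω, |X ω| ≤ S) (hYbd : ∀ᵐ ω, |Y ω| ≤ S)
    (E₁ E₂ : Set Ω) (hE₁ : MeasurableSet E₁) (hE₂ : MeasurableSet E₂)
    (hindep : IndepFun (fun ω => X ω * E₁ᶜ.indicator (fun _ => (1 : ℝ)) ω)
      (fun ω => Y ω * E₂ᶜ.indicator (fun _ => (1 : ℝ)) ω)) :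
    |∫ ω, (X ω - ∫ ω', X ω') * (Y ω - ∫ ω', Y ω')|
      ≤ 6 * S ^ 2 * max (volume E₁).toReal (volume E₂).toReal :=
  abs_cov_le_of_indep_off_exceptional_general X Y hX hY S hXbd hYbd E₁ E₂ hE₁ hE₂ hindep
end
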